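/- arXiv:2211.04090 — 5 statements merged into one kernel-verified Lean document; each statement's English description precedes it below -/
import Mathlib

section
/- Suppose a ≠ 0, h ≠ 0, and set r = |⟨a, h⟩|/(‖a‖·‖h‖) and t = Ω/(P₀·‖h‖²). Assume 0 < t ≤ 1 and r < 1. Let u₂ = √((1−t)/(1−r²)), z₂ = √(P₀(1−t)/(1−r²)), and z₁ = √P₀·(√t − u₂·r)·φ, where φ = ⟨h, a⟩/|⟨h, a⟩| if ⟨h, a⟩ ≠ 0 and φ = 1 otherwise. Then the beamformer ŵ = z₁·h/‖h‖ + z₂·a/‖a‖ satisfies ‖ŵ‖² = P₀, |⟨h, ŵ⟩|² = Ω (both constraints hold with equality), and achieves the objective value |⟨a, ŵ⟩|² = P₀·‖a‖²·(r·√t + √((1−r²)(1−t)))². (Achievability part of the third case of Lemma 1.) -/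
local notation "⟪" x ", " y "⟫" => @inner ℂ _ _ x y

/-!
Write `e₁ = h/‖h‖`, `e₂ = a/‖a‖` and `⟪e₁, e₂⟫ = r φ` with `‖φ‖ = 1`. For real `x, y` the vector
`w = (x φ) e₁ + y e₂` satisfies `⟪e₁, w⟫ = (x + y r) φ`, `⟪e₂, w⟫ = x r + y` and
`‖w‖² = (x + y r)² + y² (1 - r²)`: the phase `φ` aligns the two components, so everything reduces to
real arithmetic. The choice `x + y r = √(P₀ t)`, `y² (1 - r²) = P₀ (1 - t)` makes both constraints
tight, and then `x r + y = √P₀ (r √t + √((1 - r²)(1 - t)))`.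
-/

namespace Complex

theorem norm_phase (z : ℂ) : ‖if z ≠ 0 then z / (‖z‖ : ℂ) else 1‖ = 1 := by
  split_ifs with hz
  · rw [norm_div, norm_real, norm_norm, div_self (norm_ne_zero_iff.mpr hz)]
  · exact norm_one

theorem norm_mul_phase (z : ℂ) : (‖z‖ : ℂ) * (if z ≠ 0 then z / (‖z‖ : ℂ) else 1) = z := by
  split_ifs with hz
  · exact mul_div_cancel₀ z (ofReal_ne_zero.mpr (norm_ne_zero_iff.mpr hz))
  · simp [not_not.mp hz]

theorem conj_mul_self_of_norm_eq_one {φ : ℂ} (hφ : ‖φ‖ = 1) : starRingEnd ℂ φ * φ = 1 := by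
  rw [conj_mul', hφ]; norm_num

end Complex

theorem Real.sqrt_div_mul_self {b : ℝ} (c : ℝ) (hb : 0 < b) :
    Real.sqrt (c / b) * b = Real.sqrt (b * c) := by
  rw [← Real.sqrt_sq hb.le, ← Real.sqrt_mul', Real.sqrt_sq hb.le]
  · congr 1; field_simp
  · positivity

section

variable {E : Type*} [NormedAddCommGroup E] [InnerProductSpace ℂ E] {e₁ e₂ : E} {ρ : ℝ} {φ : ℂ}

theorem inner_fst_smul_add_smul (he₁ : ‖e₁‖ = 1) (h₁₂ : ⟪e₁, e₂⟫ = ρ * φ) (x y : ℝ) :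
    ⟪e₁, ((x : ℂ) * φ) • e₁ + (y : ℂ) • e₂⟫ = ((x + y * ρ : ℝ) : ℂ) * φ := by
  rw [inner_add_right, inner_smul_right, inner_smul_right, inner_self_eq_norm_sq_to_K, he₁, h₁₂]
  push_cast; ring

theorem inner_snd_smul_add_smul (he₂ : ‖e₂‖ = 1) (h₁₂ : ⟪e₁, e₂⟫ = ρ * φ) (hφ : ‖φ‖ = 1)
    (x y : ℝ) : ⟪e₂, ((x : ℂ) * φ) • e₁ + (y : ℂ) • e₂⟫ = ((x * ρ + y : ℝ) : ℂ) := by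
  rw [inner_add_right, inner_smul_right, inner_smul_right, inner_self_eq_norm_sq_to_K, he₂,
    ← inner_conj_symm, h₁₂, map_mul, Complex.conj_ofReal]
  push_cast
  linear_combination ((x : ℂ) * ρ) * Complex.conj_mul_self_of_norm_eq_one hφ

theorem norm_sq_smul_add_smul (he₁ : ‖e₁‖ = 1) (he₂ : ‖e₂‖ = 1) (h₁₂ : ⟪e₁, e₂⟫ = ρ * φ)
    (hφ : ‖φ‖ = 1) (x y : ℝ) :
    ‖((x : ℂ) * φ) • e₁ + (y : ℂ) • e₂‖ ^ 2 = (x + y * ρ) ^ 2 + y ^ 2 * (1 - ρ ^ 2) := by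
  have hw : ⟪((x : ℂ) * φ) • e₁ + (y : ℂ) • e₂, ((x : ℂ) * φ) • e₁ + (y : ℂ) • e₂⟫ =
      ((x * (x + y * ρ) + y * (x * ρ + y) : ℝ) : ℂ) := by
    rw [inner_add_left, inner_smul_left, inner_smul_left, inner_fst_smul_add_smul he₁ h₁₂,
      inner_snd_smul_add_smul he₂ h₁₂ hφ, map_mul, Complex.conj_ofReal, Complex.conj_ofReal]
    push_cast
    linear_combination ((x : ℂ) * (x + y * ρ)) * Complex.conj_mul_self_of_norm_eq_one hφ
  rw [@norm_sq_eq_re_inner ℂ, hw, RCLike.re_to_complex, Complex.ofReal_re]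
  ring

theorem norm_mul_norm_inner_inv_norm_smul_left (v w : E) :
    ‖v‖ * ‖⟪(‖v‖ : ℂ)⁻¹ • v, w⟫‖ = ‖⟪v, w⟫‖ := by
  rcases eq_or_ne v 0 with rfl | hv
  · simp
  · rw [inner_smul_left, norm_mul, Complex.norm_conj, norm_inv, Complex.norm_real, norm_norm,
      mul_inv_cancel_left₀ (norm_ne_zero_iff.mpr hv)]

end

theorem stmt_2_general (N_T : ℕ) (P₀ Ω : ℝ) (hP₀ : 0 < P₀)
    (h a : EuclideanSpace ℂ (Fin N_T)) (ha : a ≠ 0) (hh : h ≠ 0)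
    (r t : ℝ)
    (hr : r = ‖⟪a, h⟫‖ / (‖a‖ * ‖h‖))
    (ht : t = Ω / (P₀ * ‖h‖ ^ 2))
    (ht_pos : 0 < t) (ht_le : t ≤ 1) (hr_lt : r < 1)
    (u₂ z₂ : ℝ) (φ z₁ : ℂ)
    (hu₂ : u₂ = Real.sqrt ((1 - t) / (1 - r ^ 2)))
    (hz₂ : z₂ = Real.sqrt (P₀ * (1 - t) / (1 - r ^ 2)))
    (hφ : φ = if ⟪h, a⟫ ≠ 0 then ⟪h, a⟫ / (‖⟪h, a⟫‖ : ℂ) else 1)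
    (hz₁ : z₁ = (Real.sqrt P₀ * (Real.sqrt t - u₂ * r) : ℝ) * φ)
    (w_opt : EuclideanSpace ℂ (Fin N_T))
    (hw_opt : w_opt = z₁ • ((‖h‖ : ℂ)⁻¹ • h) + (z₂ : ℂ) • ((‖a‖ : ℂ)⁻¹ • a)) :
    ‖w_opt‖ ^ 2 = P₀ ∧
      ‖⟪h, w_opt⟫‖ ^ 2 = Ω ∧
      ‖⟪a, w_opt⟫‖ ^ 2 =
        P₀ * ‖a‖ ^ 2 *
          (r * Real.sqrt t + Real.sqrt ((1 - r ^ 2) * (1 - t))) ^ 2 := by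
  have hr₀ : 0 ≤ r := hr ▸ by positivity
  have hr₁ : 0 < 1 - r ^ 2 := by nlinarith
  have hS : Real.sqrt P₀ ^ 2 = P₀ := Real.sq_sqrt hP₀.le
  have hT : Real.sqrt t ^ 2 = t := Real.sq_sqrt ht_pos.le
  have hu₂_sq : u₂ ^ 2 * (1 - r ^ 2) = 1 - t := by
    rw [hu₂, Real.sq_sqrt (div_nonneg (by linarith) hr₁.le), div_mul_cancel₀ _ hr₁.ne']
  have hz₂u₂ : z₂ = Real.sqrt P₀ * u₂ := by
    rw [hz₂, hu₂, mul_div_assoc, Real.sqrt_mul hP₀.le]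
  have h₁₂ : ⟪(‖h‖ : ℂ)⁻¹ • h, (‖a‖ : ℂ)⁻¹ • a⟫ = r * φ := by
    rw [inner_smul_left, inner_smul_right, ← Complex.norm_mul_phase ⟪h, a⟫, ← hφ,
      norm_inner_symm, hr, map_inv₀, Complex.conj_ofReal]
    push_cast
    field_simp
  have hφ₁ : ‖φ‖ = 1 := hφ ▸ Complex.norm_phase _
  set x := Real.sqrt P₀ * (Real.sqrt t - u₂ * r)
  rw [hz₁] at hw_opt
  subst hw_opt
  have he₁ : ‖(‖h‖ : ℂ)⁻¹ • h‖ = 1 := norm_smul_inv_norm hh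
  have he₂ : ‖(‖a‖ : ℂ)⁻¹ • a‖ = 1 := norm_smul_inv_norm ha
  have hsum : x + z₂ * r = Real.sqrt P₀ * Real.sqrt t := by rw [hz₂u₂]; ring
  have hcross :
      x * r + z₂ = Real.sqrt P₀ * (r * Real.sqrt t + Real.sqrt ((1 - r ^ 2) * (1 - t))) := by
    rw [hz₂u₂, ← Real.sqrt_div_mul_self _ hr₁, ← hu₂]; ring
  refine ⟨?_, ?_, ?_⟩
  · rw [norm_sq_smul_add_smul he₁ he₂ h₁₂ hφ₁, hsum, hz₂u₂]
    linear_combination (Real.sqrt t ^ 2 + u₂ ^ 2 * (1 - r ^ 2)) * hS + P₀ * hT + P₀ * hu₂_sq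
  · rw [← norm_mul_norm_inner_inv_norm_smul_left h, inner_fst_smul_add_smul he₁ h₁₂, norm_mul,
      hφ₁, Complex.norm_real, Real.norm_eq_abs, hsum, mul_one, mul_pow, sq_abs, mul_pow, hS, hT, ht]
    field_simp
  · rw [← norm_mul_norm_inner_inv_norm_smul_left a, inner_snd_smul_add_smul he₂ h₁₂ hφ₁,
      Complex.norm_real, Real.norm_eq_abs, hcross, mul_pow, sq_abs, mul_pow, hS]
    ring

/-- Achievability part of the third case of Lemma 1: the beamformer
`ŵ = z₁·h/‖h‖ + z₂·a/‖a‖` meets both constraints with equality and achieves the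
objective value `P₀·‖a‖²·(r·√t + √((1−r²)(1−t)))²`. -/
theorem stmt_2 (N_T : ℕ) (P₀ Ω : ℝ) (hP₀ : 0 < P₀) (hΩ : 0 < Ω)
    (h a : EuclideanSpace ℂ (Fin N_T)) (ha : a ≠ 0) (hh : h ≠ 0)
    (r t : ℝ)
    (hr : r = ‖⟪a, h⟫‖ / (‖a‖ * ‖h‖))
    (ht : t = Ω / (P₀ * ‖h‖ ^ 2))
    (ht_pos : 0 < t) (ht_le : t ≤ 1) (hr_lt : r < 1)
    (u₂ z₂ : ℝ) (φ z₁ : ℂ)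
    (hu₂ : u₂ = Real.sqrt ((1 - t) / (1 - r ^ 2)))
    (hz₂ : z₂ = Real.sqrt (P₀ * (1 - t) / (1 - r ^ 2)))
    (hφ : φ = if ⟪h, a⟫ ≠ 0 then ⟪h, a⟫ / (‖⟪h, a⟫‖ : ℂ) else 1)
    (hz₁ : z₁ = (Real.sqrt P₀ * (Real.sqrt t - u₂ * r) : ℝ) * φ)
    (w_opt : EuclideanSpace ℂ (Fin N_T))
    (hw_opt : w_opt = z₁ • ((‖h‖ : ℂ)⁻¹ • h) + (z₂ : ℂ) • ((‖a‖ : ℂ)⁻¹ • a)) :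
    ‖w_opt‖ ^ 2 = P₀ ∧
      ‖⟪h, w_opt⟫‖ ^ 2 = Ω ∧
      ‖⟪a, w_opt⟫‖ ^ 2 =
        P₀ * ‖a‖ ^ 2 *
          (r * Real.sqrt t + Real.sqrt ((1 - r ^ 2) * (1 - t))) ^ 2 :=
  stmt_2_general N_T P₀ Ω hP₀ h a ha hh r t hr ht ht_pos ht_le hr_lt u₂ z₂ φ z₁ hu₂ hz₂ hφ hz₁ w_opt
    hw_opt
end

section
/- Suppose a ≠ 0, h ≠ 0, 0 < Ω ≤ P₀·‖h‖², and P₀·|⟨h, a⟩|² ≤ Ω·‖a‖² (i.e., the matched beamformer √P₀·a/‖a‖ violates the SNR constraint or meets it with equality). Set r = |⟨a, h⟩|/(‖a‖·‖h‖) and t = Ω/(P₀·‖h‖²), so that r² ≤ t ≤ 1. Then every feasible w satisfies |⟨a, w⟩|² ≤ P₀·‖a‖²·(r·√t + √((1−r²)(1−t)))². (Optimality part of the third case of Lemma 1.) -/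
local notation "⟪" x ", " y "⟫" => @inner ℂ _ _ x y

/-! Split `a` and `w` along the line `ℂ h` and its orthogonal complement and apply
Cauchy–Schwarz to each pair of components. With `r = ‖P a‖ / ‖a‖` and `s = ‖P w‖ / √P₀`, where
`P` projects onto `ℂ h`, this gives
`|⟨a, w⟩| ≤ ‖a‖ √P₀ (r s + √(1 - r²) √(1 - s²)) = ‖a‖ √P₀ cos (arccos r - arccos s)`.
The SNR constraint forces `s ≥ √t ≥ r`, and cosine decreases on `[0, π]`, so the worst case
is `s = √t`. -/

open Real

namespace Real

theorem cos_arccos_sub_arccos {x y : ℝ} (hx₁ : -1 ≤ x) (hx₂ : x ≤ 1) (hy₁ : -1 ≤ y)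
    (hy₂ : y ≤ 1) : cos (arccos x - arccos y) = x * y + √(1 - x ^ 2) * √(1 - y ^ 2) := by
  rw [cos_sub, cos_arccos hx₁ hx₂, cos_arccos hy₁ hy₂, sin_arccos, sin_arccos]

theorem mul_add_sqrt_mul_sqrt_le {r p x : ℝ} (hr : -1 ≤ r) (hrp : r ≤ p) (hpx : p ≤ x)
    (hx : x ≤ 1) :
    r * x + √(1 - r ^ 2) * √(1 - x ^ 2) ≤ r * p + √(1 - r ^ 2) * √(1 - p ^ 2) := by
  have hr₁ : r ≤ 1 := by linarith
  rw [← cos_arccos_sub_arccos hr hr₁ (by linarith) hx,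
    ← cos_arccos_sub_arccos hr hr₁ (by linarith) (by linarith)]
  apply cos_le_cos_of_nonneg_of_le_pi
  · linarith [arccos_le_arccos hrp]
  · linarith [arccos_le_pi r, arccos_nonneg x]
  · linarith [arccos_le_arccos hpx]

end Real

namespace Submodule

variable {𝕜 E : Type*} [RCLike 𝕜] [NormedAddCommGroup E] [InnerProductSpace 𝕜 E]
  (K : Submodule 𝕜 E) [K.HasOrthogonalProjection]

theorem inner_eq_inner_starProjection_add_inner_starProjection_orthogonal (u v : E) :
    inner 𝕜 u v = inner 𝕜 (K.starProjection u) (K.starProjection v)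
      + inner 𝕜 (Kᗮ.starProjection u) (Kᗮ.starProjection v) := by
  have hP (x : E) : K.starProjection x ∈ K := K.starProjection_apply_mem x
  have hQ (x : E) : Kᗮ.starProjection x ∈ Kᗮ := Kᗮ.starProjection_apply_mem x
  conv_lhs => rw [← K.starProjection_add_starProjection_orthogonal u,
    ← K.starProjection_add_starProjection_orthogonal v]
  rw [inner_add_left, inner_add_right, inner_add_right,
    K.inner_right_of_mem_orthogonal (hP u) (hQ v),
    K.inner_left_of_mem_orthogonal (hP v) (hQ u)]
  ring

theorem norm_inner_le_starProjection (u v : E) :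
    ‖inner 𝕜 u v‖ ≤ ‖K.starProjection u‖ * ‖K.starProjection v‖
      + ‖Kᗮ.starProjection u‖ * ‖Kᗮ.starProjection v‖ := by
  rw [K.inner_eq_inner_starProjection_add_inner_starProjection_orthogonal u v]
  exact (norm_add_le _ _).trans
    (add_le_add (norm_inner_le_norm _ _) (norm_inner_le_norm _ _))

theorem norm_starProjection_singleton (v w : E) :
    ‖(𝕜 ∙ v).starProjection w‖ = ‖inner 𝕜 v w‖ / ‖v‖ := by
  rcases eq_or_ne v 0 with rfl | hv
  · simp
  have hv' : ‖v‖ ≠ 0 := norm_ne_zero_iff.mpr hv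
  rw [starProjection_singleton, norm_smul, norm_div, RCLike.norm_ofReal,
    abs_of_nonneg (by positivity)]
  field_simp

theorem norm_starProjection_orthogonal_eq_sqrt (v : E) :
    ‖Kᗮ.starProjection v‖ = √(‖v‖ ^ 2 - ‖K.starProjection v‖ ^ 2) := by
  rw [K.norm_sq_eq_add_norm_sq_starProjection v, add_sub_cancel_left, sqrt_sq (norm_nonneg _)]

theorem norm_inner_le_of_starProjection {u v : E} {r p ρ : ℝ}
    (hu : ‖K.starProjection u‖ = r * ‖u‖) (hr : 0 ≤ r) (hrp : r ≤ p) (hρ : 0 < ρ)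
    (hv : ‖v‖ ≤ ρ) (hpv : p * ρ ≤ ‖K.starProjection v‖) :
    ‖inner 𝕜 u v‖ ≤ ‖u‖ * ρ * (r * p + √(1 - r ^ 2) * √(1 - p ^ 2)) := by
  set s := ‖K.starProjection v‖ / ρ
  have hPv : ‖K.starProjection v‖ = s * ρ := (div_mul_cancel₀ _ hρ.ne').symm
  have hps : p ≤ s := (le_div_iff₀ hρ).mpr hpv
  have hs : s ≤ 1 := (div_le_one hρ).mpr ((K.norm_starProjection_apply_le v).trans hv)
  have hQu : ‖Kᗮ.starProjection u‖ = √(1 - r ^ 2) * ‖u‖ := by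
    rw [K.norm_starProjection_orthogonal_eq_sqrt, hu,
      show ‖u‖ ^ 2 - (r * ‖u‖) ^ 2 = (1 - r ^ 2) * ‖u‖ ^ 2 by ring,
      sqrt_mul' _ (sq_nonneg _), sqrt_sq (norm_nonneg _)]
  have hQv : ‖Kᗮ.starProjection v‖ ≤ √(1 - s ^ 2) * ρ := by
    have hv' : ‖v‖ ^ 2 ≤ ρ ^ 2 := pow_le_pow_left₀ (norm_nonneg v) hv 2
    calc ‖Kᗮ.starProjection v‖ = √(‖v‖ ^ 2 - (s * ρ) ^ 2) := by
          rw [K.norm_starProjection_orthogonal_eq_sqrt, hPv]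
      _ ≤ √((1 - s ^ 2) * ρ ^ 2) := sqrt_le_sqrt (by nlinarith)
      _ = √(1 - s ^ 2) * ρ := by rw [sqrt_mul' _ (sq_nonneg ρ), sqrt_sq hρ.le]
  calc ‖inner 𝕜 u v‖
      ≤ ‖K.starProjection u‖ * ‖K.starProjection v‖
          + ‖Kᗮ.starProjection u‖ * ‖Kᗮ.starProjection v‖ := K.norm_inner_le_starProjection u v
    _ ≤ r * ‖u‖ * (s * ρ) + √(1 - r ^ 2) * ‖u‖ * (√(1 - s ^ 2) * ρ) := by
        rw [hu, hPv, hQu]; gcongr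
    _ = ‖u‖ * ρ * (r * s + √(1 - r ^ 2) * √(1 - s ^ 2)) := by ring
    _ ≤ ‖u‖ * ρ * (r * p + √(1 - r ^ 2) * √(1 - p ^ 2)) :=
        mul_le_mul_of_nonneg_left (mul_add_sqrt_mul_sqrt_le (by linarith) hrp hps hs)
          (by positivity)

end Submodule

theorem stmt_3_general (N_T : ℕ) (P₀ Ω : ℝ) (hP₀ : 0 < P₀)
    (h a : EuclideanSpace ℂ (Fin N_T)) (ha : a ≠ 0) (hh : h ≠ 0)
    (hfeas : Ω ≤ P₀ * ‖h‖ ^ 2)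
    (hcase : P₀ * ‖⟪h, a⟫‖ ^ 2 ≤ Ω * ‖a‖ ^ 2)
    (r t : ℝ)
    (hr : r = ‖⟪a, h⟫‖ / (‖a‖ * ‖h‖))
    (ht : t = Ω / (P₀ * ‖h‖ ^ 2)) :
    ∀ w : EuclideanSpace ℂ (Fin N_T),
      ‖w‖ ^ 2 ≤ P₀ → Ω ≤ ‖⟪h, w⟫‖ ^ 2 →
        ‖⟪a, w⟫‖ ^ 2 ≤
          P₀ * ‖a‖ ^ 2 *
            (r * Real.sqrt t + Real.sqrt ((1 - r ^ 2) * (1 - t))) ^ 2 := by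
  intro w hw hsnr
  have ha₀ : 0 < ‖a‖ := norm_pos_iff.mpr ha
  have hh₀ : 0 < ‖h‖ := norm_pos_iff.mpr hh
  have hr₀ : 0 ≤ r := hr ▸ by positivity
  have hrt : r ^ 2 ≤ t := by
    rw [hr, ht, div_pow, div_le_div_iff₀ (by positivity) (by positivity), norm_inner_symm]
    nlinarith
  have ht₁ : t ≤ 1 := ht ▸ div_le_one_of_le₀ hfeas (by positivity)
  have hPa : ‖(ℂ ∙ h).starProjection a‖ = r * ‖a‖ := by
    rw [Submodule.norm_starProjection_singleton, hr, norm_inner_symm]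
    field_simp
  have hPw : √t * √P₀ ≤ ‖(ℂ ∙ h).starProjection w‖ := by
    rw [Submodule.norm_starProjection_singleton, ← sqrt_mul ((sq_nonneg r).trans hrt), ht,
      show Ω / (P₀ * ‖h‖ ^ 2) * P₀ = Ω / ‖h‖ ^ 2 by field_simp, sqrt_div' _ (sq_nonneg _),
      sqrt_sq hh₀.le]
    gcongr
    exact (sqrt_le_left (norm_nonneg _)).mpr hsnr
  have hbound := (ℂ ∙ h).norm_inner_le_of_starProjection hPa hr₀ (le_sqrt_of_sq_le hrt)
    (sqrt_pos.mpr hP₀) (le_sqrt_of_sq_le hw) hPw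
  rw [sq_sqrt ((sq_nonneg r).trans hrt), ← sqrt_mul' _ (by linarith)] at hbound
  calc ‖⟪a, w⟫‖ ^ 2 ≤ (‖a‖ * √P₀ * (r * √t + √((1 - r ^ 2) * (1 - t)))) ^ 2 := by gcongr
    _ = _ := by rw [mul_pow, mul_pow, sq_sqrt hP₀.le]; ring

/-- Optimality part of the third case of Lemma 1: when the matched beamformer
violates (or exactly meets) the SNR constraint, every feasible `w` satisfies
`|⟨a,w⟩|² ≤ P₀·‖a‖²·(r·√t + √((1−r²)(1−t)))²`. -/
theorem stmt_3 (N_T : ℕ) (P₀ Ω : ℝ) (hP₀ : 0 < P₀) (hΩ : 0 < Ω)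
    (h a : EuclideanSpace ℂ (Fin N_T)) (ha : a ≠ 0) (hh : h ≠ 0)
    (hfeas : Ω ≤ P₀ * ‖h‖ ^ 2)
    (hcase : P₀ * ‖⟪h, a⟫‖ ^ 2 ≤ Ω * ‖a‖ ^ 2)
    (r t : ℝ)
    (hr : r = ‖⟪a, h⟫‖ / (‖a‖ * ‖h‖))
    (ht : t = Ω / (P₀ * ‖h‖ ^ 2)) :
    ∀ w : EuclideanSpace ℂ (Fin N_T),
      ‖w‖ ^ 2 ≤ P₀ → Ω ≤ ‖⟪h, w⟫‖ ^ 2 →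
        ‖⟪a, w⟫‖ ^ 2 ≤
          P₀ * ‖a‖ ^ 2 *
            (r * Real.sqrt t + Real.sqrt ((1 - r ^ 2) * (1 - t))) ^ 2 :=
  stmt_3_general N_T P₀ Ω hP₀ h a ha hh hfeas hcase r t hr ht
end

section
/- Let n ≥ 2, let v₁, v₂ ∈ ℂ^n be unit vectors with r = |⟨v₂, v₁⟩| < 1, and let 0 < t ≤ 1. Then the maximum of |⟨v₂, c⟩|² over all unit vectors c ∈ ℂ^n satisfying |⟨v₁, c⟩|² = t equals (r·√t + √((1−r²)(1−t)))²: every unit vector c with |⟨v₁, c⟩|² = t satisfies |⟨v₂, c⟩|² ≤ (r·√t + √((1−r²)(1−t)))², and there exists a unit vector c with |⟨v₁, c⟩|² = t attaining equality. (The normalized problem (29) in the proof of Lemma 1, solved when the SNR constraint is active.) -/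
local notation "⟪" x ", " y "⟫" => @inner ℂ _ _ x y

/-!
Write `v₂ = α • v₁ + √(1 - r²) • w` with `w` a unit vector orthogonal to `v₁` and `‖α‖ = r`.
Then `⟪v₂, c⟫ = conj α * ⟪v₁, c⟫ + √(1 - r²) * ⟪w, c⟫`, and Bessel's inequality for the
orthonormal pair `v₁, w` gives `‖⟪w, c⟫‖² ≤ 1 - t`, so the triangle inequality yields the bound.
It is attained by `c = √t φ • v₁ + √(1 - t) • w`, the phase `φ` aligning the two terms.
-/

open scoped InnerProductSpace

section

variable {𝕜 E : Type*} [RCLike 𝕜] [NormedAddCommGroup E] [InnerProductSpace 𝕜 E]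

theorem orthonormal_pair {v w : E} (hv : ‖v‖ = 1) (hw : ‖w‖ = 1) (hvw : ⟪v, w⟫_𝕜 = 0) :
    Orthonormal 𝕜 ![v, w] := by
  have hwv : ⟪w, v⟫_𝕜 = 0 := inner_eq_zero_symm.mp hvw
  rw [orthonormal_iff_ite]
  intro i j
  fin_cases i <;> fin_cases j <;> simp [hv, hw, hvw, hwv]

theorem exists_orthonormal_decomposition {v₁ v₂ : E} (hv₁ : ‖v₁‖ = 1) (hv₂ : ‖v₂‖ = 1)
    (hlt : ‖⟪v₁, v₂⟫_𝕜‖ < 1) :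
    ∃ w : E, Orthonormal 𝕜 ![v₁, w] ∧
      v₂ = ⟪v₁, v₂⟫_𝕜 • v₁ + ((√(1 - ‖⟪v₁, v₂⟫_𝕜‖ ^ 2) : ℝ) : 𝕜) • w := by
  set α := ⟪v₁, v₂⟫_𝕜
  set u := v₂ - α • v₁
  have hv₁u : ⟪v₁, u⟫_𝕜 = 0 := by
    simp [u, α, inner_sub_right, inner_smul_right, inner_self_eq_norm_sq_to_K, hv₁]
  have hu : ‖u‖ = √(1 - ‖α‖ ^ 2) := by
    have hpyth := norm_add_sq_eq_norm_sq_add_norm_sq_of_inner_eq_zero (α • v₁) u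
      (by rw [inner_smul_left, hv₁u, mul_zero])
    rw [add_sub_cancel, hv₂, norm_smul, hv₁] at hpyth
    rw [← Real.sqrt_sq (norm_nonneg u)]
    congr 1
    linarith
  have hu₀ : u ≠ 0 := by
    rw [← norm_pos_iff, hu, Real.sqrt_pos]
    nlinarith [norm_nonneg α]
  refine ⟨((‖u‖ : 𝕜))⁻¹ • u, orthonormal_pair hv₁ (norm_smul_inv_norm hu₀) ?_, ?_⟩
  · rw [inner_smul_right, hv₁u, mul_zero]
  · have : (‖u‖ : 𝕜) ≠ 0 := by exact_mod_cast (norm_pos_iff.mpr hu₀).ne'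
    rw [← hu, smul_smul, mul_inv_cancel₀ this, one_smul, add_sub_cancel]

theorem norm_inner_smul_add_smul_le {v₁ w : E} (h : Orthonormal 𝕜 ![v₁, w]) (α : 𝕜) {s : ℝ}
    (hs : 0 ≤ s) {c : E} (hc : ‖c‖ = 1) :
    ‖⟪α • v₁ + (s : 𝕜) • w, c⟫_𝕜‖ ≤ ‖α‖ * ‖⟪v₁, c⟫_𝕜‖ + s * √(1 - ‖⟪v₁, c⟫_𝕜‖ ^ 2) := by
  have hbessel : ‖⟪v₁, c⟫_𝕜‖ ^ 2 + ‖⟪w, c⟫_𝕜‖ ^ 2 ≤ 1 := by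
    simpa [Fin.sum_univ_two, hc] using h.sum_inner_products_le c (s := Finset.univ)
  have hw : ‖⟪w, c⟫_𝕜‖ ≤ √(1 - ‖⟪v₁, c⟫_𝕜‖ ^ 2) := Real.le_sqrt_of_sq_le (by linarith)
  calc ‖⟪α • v₁ + (s : 𝕜) • w, c⟫_𝕜‖
      = ‖(starRingEnd 𝕜) α * ⟪v₁, c⟫_𝕜 + (s : 𝕜) * ⟪w, c⟫_𝕜‖ := by
        rw [inner_add_left, inner_smul_left, inner_smul_left, RCLike.conj_ofReal]
    _ ≤ ‖α‖ * ‖⟪v₁, c⟫_𝕜‖ + s * ‖⟪w, c⟫_𝕜‖ := by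
        refine (norm_add_le _ _).trans_eq ?_
        rw [norm_mul, norm_mul, RCLike.norm_conj, RCLike.norm_of_nonneg hs]
    _ ≤ ‖α‖ * ‖⟪v₁, c⟫_𝕜‖ + s * √(1 - ‖⟪v₁, c⟫_𝕜‖ ^ 2) := by gcongr

/-- The `v₁`-component of `c` is given the phase of `α`, so that both terms of
`⟪α • v₁ + s • w, c⟫` are real and nonnegative. -/
theorem exists_norm_inner_smul_add_smul_eq {v₁ w : E} (h : Orthonormal 𝕜 ![v₁, w]) (α : 𝕜)
    {s t : ℝ} (hs : 0 ≤ s) (ht₀ : 0 ≤ t) (ht₁ : t ≤ 1) :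
    ∃ c : E, ‖c‖ = 1 ∧ ‖⟪v₁, c⟫_𝕜‖ ^ 2 = t ∧
      ‖⟪α • v₁ + (s : 𝕜) • w, c⟫_𝕜‖ = ‖α‖ * √t + s * √(1 - t) := by
  have hv₁ : ‖v₁‖ = 1 := by simpa using h.1 0
  have hw : ‖w‖ = 1 := by simpa using h.1 1
  have hv₁w : ⟪v₁, w⟫_𝕜 = 0 := by simpa using h.2 (by decide : (0 : Fin 2) ≠ 1)
  have hwv₁ : ⟪w, v₁⟫_𝕜 = 0 := inner_eq_zero_symm.mp hv₁w
  obtain ⟨φ, hφ, hφα⟩ := RCLike.exists_norm_eq_mul_self ((starRingEnd 𝕜) α)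
  set c := (φ * (√t : 𝕜)) • v₁ + ((√(1 - t) : ℝ) : 𝕜) • w
  have hv₁c : ⟪v₁, c⟫_𝕜 = φ * (√t : 𝕜) := by
    simp [c, inner_add_right, inner_smul_right, inner_self_eq_norm_sq_to_K, hv₁, hv₁w]
  have hwc : ⟪w, c⟫_𝕜 = ((√(1 - t) : ℝ) : 𝕜) := by
    simp [c, inner_add_right, inner_smul_right, inner_self_eq_norm_sq_to_K, hw, hwv₁]
  have hc : ‖c‖ = 1 := by
    have hpyth := norm_add_sq_eq_norm_sq_add_norm_sq_of_inner_eq_zero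
      ((φ * (√t : 𝕜)) • v₁) (((√(1 - t) : ℝ) : 𝕜) • w)
      (by rw [inner_smul_left, inner_smul_right, hv₁w, mul_zero, mul_zero])
    simp only [norm_smul, norm_mul, hφ, hv₁, hw, RCLike.norm_of_nonneg (Real.sqrt_nonneg _),
      one_mul, mul_one, Real.mul_self_sqrt ht₀, Real.mul_self_sqrt (sub_nonneg.mpr ht₁),
      add_sub_cancel] at hpyth
    exact (mul_self_eq_one_iff.mp hpyth).resolve_right (by linarith [norm_nonneg c])
  refine ⟨c, hc, ?_, ?_⟩
  · rw [hv₁c, norm_mul, hφ, one_mul, RCLike.norm_of_nonneg (Real.sqrt_nonneg _),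
      Real.sq_sqrt ht₀]
  · rw [inner_add_left, inner_smul_left, inner_smul_left, RCLike.conj_ofReal, hv₁c, hwc,
      ← mul_assoc, mul_comm _ φ, ← hφα, RCLike.norm_conj, ← RCLike.ofReal_mul,
      ← RCLike.ofReal_mul, ← RCLike.ofReal_add, RCLike.norm_of_nonneg (by positivity)]

end

theorem stmt_5_general (n : ℕ) (v₁ v₂ : EuclideanSpace ℂ (Fin n))
    (hv₁ : ‖v₁‖ = 1) (hv₂ : ‖v₂‖ = 1)
    (r t : ℝ) (hr : r = ‖⟪v₂, v₁⟫‖) (hr_lt : r < 1)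
    (ht_pos : 0 < t) (ht_le : t ≤ 1) :
    (∀ c : EuclideanSpace ℂ (Fin n), ‖c‖ = 1 → ‖⟪v₁, c⟫‖ ^ 2 = t →
        ‖⟪v₂, c⟫‖ ^ 2 ≤
          (r * Real.sqrt t + Real.sqrt ((1 - r ^ 2) * (1 - t))) ^ 2) ∧
      (∃ c : EuclideanSpace ℂ (Fin n), ‖c‖ = 1 ∧ ‖⟪v₁, c⟫‖ ^ 2 = t ∧
        ‖⟪v₂, c⟫‖ ^ 2 =
          (r * Real.sqrt t + Real.sqrt ((1 - r ^ 2) * (1 - t))) ^ 2) := by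
  have hr' : r = ‖⟪v₁, v₂⟫‖ := by rw [hr, norm_inner_symm]
  obtain ⟨w, hw, hdecomp⟩ := exists_orthonormal_decomposition hv₁ hv₂ (hr' ▸ hr_lt)
  rw [← hr'] at hdecomp
  have hr₀ : 0 ≤ r := hr ▸ norm_nonneg _
  rw [Real.sqrt_mul (by nlinarith)]
  constructor
  · intro c hc hct
    have hv₁c : ‖⟪v₁, c⟫‖ = √t := by rw [← hct, Real.sqrt_sq (norm_nonneg _)]
    have hbound := norm_inner_smul_add_smul_le hw ⟪v₁, v₂⟫ (Real.sqrt_nonneg (1 - r ^ 2)) hc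
    rw [← hdecomp, hv₁c, Real.sq_sqrt ht_pos.le, ← hr'] at hbound
    exact pow_le_pow_left₀ (norm_nonneg _) hbound 2
  · obtain ⟨c, hc, hct, hattain⟩ := exists_norm_inner_smul_add_smul_eq hw ⟪v₁, v₂⟫
      (Real.sqrt_nonneg (1 - r ^ 2)) ht_pos.le ht_le
    exact ⟨c, hc, hct, by rw [← hdecomp, ← hr'] at hattain; rw [hattain]⟩

/-- The normalized problem (29) in the proof of Lemma 1: for unit vectors
`v₁, v₂` with `r = |⟨v₂,v₁⟩| < 1` and `0 < t ≤ 1`, the maximum of `|⟨v₂,c⟩|²`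
over unit vectors `c` with `|⟨v₁,c⟩|² = t` equals
`(r·√t + √((1−r²)(1−t)))²`. -/
theorem stmt_5 (n : ℕ) (hn : 2 ≤ n) (v₁ v₂ : EuclideanSpace ℂ (Fin n))
    (hv₁ : ‖v₁‖ = 1) (hv₂ : ‖v₂‖ = 1)
    (r t : ℝ) (hr : r = ‖⟪v₂, v₁⟫‖) (hr_lt : r < 1)
    (ht_pos : 0 < t) (ht_le : t ≤ 1) :
    (∀ c : EuclideanSpace ℂ (Fin n), ‖c‖ = 1 → ‖⟪v₁, c⟫‖ ^ 2 = t →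
        ‖⟪v₂, c⟫‖ ^ 2 ≤
          (r * Real.sqrt t + Real.sqrt ((1 - r ^ 2) * (1 - t))) ^ 2) ∧
      (∃ c : EuclideanSpace ℂ (Fin n), ‖c‖ = 1 ∧ ‖⟪v₁, c⟫‖ ^ 2 = t ∧
        ‖⟪v₂, c⟫‖ ^ 2 =
          (r * Real.sqrt t + Real.sqrt ((1 - r ^ 2) * (1 - t))) ^ 2) :=
  stmt_5_general n v₁ v₂ hv₁ hv₂ r t hr hr_lt ht_pos ht_le
end

section
/- If w is feasible, ⟨a, w⟩ ≠ 0, and ‖w‖² < P₀, then the scaled beamformer w' = √(P₀/‖w‖²)·w is also feasible (with ‖w'‖² = P₀ and |⟨h, w'⟩|² ≥ Ω), and it achieves a strictly larger objective value: |⟨a, w'⟩|² > |⟨a, w⟩|². Consequently, any maximizer w* of |⟨a, w⟩|² over the feasible set with ⟨a, w*⟩ ≠ 0 must satisfy the power constraint with equality, ‖w*‖² = P₀. (The first step of the proof of Lemma 1 in Appendix A.) -/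
/-! Scaling `w` by the real factor `c = √(P₀ / ‖w‖²) > 1` brings its power to exactly `P₀` and
multiplies every `|⟨x, w⟩|²` by `c² > 1`: the SNR stays above `Ω`, and a nonzero objective
strictly grows. A maximizer strictly below the power budget could therefore be beaten. -/

local notation "⟪" x ", " y "⟫" => @inner ℂ _ _ x y

theorem norm_sqrt_div_norm_sq_smul_sq {F : Type*} [NormedAddCommGroup F] [NormedSpace ℝ F]
    {P : ℝ} (hP : 0 ≤ P) {w : F} (hw : w ≠ 0) : ‖√(P / ‖w‖ ^ 2) • w‖ ^ 2 = P := by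
  have hw2 : ‖w‖ ^ 2 ≠ 0 := by positivity
  rw [norm_smul, mul_pow, Real.norm_eq_abs, sq_abs, Real.sq_sqrt (by positivity),
    div_mul_cancel₀ _ hw2]

theorem one_lt_sqrt_div_norm_sq {F : Type*} [NormedAddCommGroup F] {P : ℝ} {w : F}
    (hw : w ≠ 0) (hlt : ‖w‖ ^ 2 < P) : 1 < √(P / ‖w‖ ^ 2) :=
  Real.lt_sqrt_of_sq_lt <| by rwa [one_pow, one_lt_div (by positivity)]

theorem norm_inner_real_smul_right {𝕜 E : Type*} [RCLike 𝕜] [NormedAddCommGroup E]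
    [InnerProductSpace 𝕜 E] [Module ℝ E] [IsScalarTower ℝ 𝕜 E] (x y : E) (c : ℝ) :
    ‖inner 𝕜 x (c • y)‖ = |c| * ‖inner 𝕜 x y‖ := by
  rw [RCLike.real_smul_eq_coe_smul (K := 𝕜), inner_smul_right, norm_mul, RCLike.norm_ofReal]

theorem rescale_to_full_power {𝕜 E : Type*} [RCLike 𝕜] [NormedAddCommGroup E]
    [InnerProductSpace 𝕜 E] [NormedSpace ℝ E] [IsScalarTower ℝ 𝕜 E] {P Ω : ℝ} {h a w : E}
    (hsnr : Ω ≤ ‖inner 𝕜 h w‖ ^ 2) (hobj : inner 𝕜 a w ≠ 0) (hlt : ‖w‖ ^ 2 < P) :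
    ‖√(P / ‖w‖ ^ 2) • w‖ ^ 2 = P ∧ Ω ≤ ‖inner 𝕜 h (√(P / ‖w‖ ^ 2) • w)‖ ^ 2 ∧
      ‖inner 𝕜 a w‖ ^ 2 < ‖inner 𝕜 a (√(P / ‖w‖ ^ 2) • w)‖ ^ 2 := by
  have hw : w ≠ 0 := by
    rintro rfl
    simp at hobj
  have hc : 1 < |√(P / ‖w‖ ^ 2)| := by
    rw [abs_of_nonneg (Real.sqrt_nonneg _)]
    exact one_lt_sqrt_div_norm_sq hw hlt
  refine ⟨norm_sqrt_div_norm_sq_smul_sq ((sq_nonneg _).trans hlt.le) hw, ?_, ?_⟩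
  · rw [norm_inner_real_smul_right]
    exact hsnr.trans (by gcongr; exact le_mul_of_one_le_left (norm_nonneg _) hc.le)
  · rw [norm_inner_real_smul_right]
    gcongr
    exact lt_mul_of_one_lt_left (norm_pos_iff.mpr hobj) hc

theorem stmt_6_general (N_T : ℕ) (P₀ Ω : ℝ)
    (h a w : EuclideanSpace ℂ (Fin N_T))
    (hw_snr : Ω ≤ ‖⟪h, w⟫‖ ^ 2)
    (hw_obj : ⟪a, w⟫ ≠ 0) (hw_strict : ‖w‖ ^ 2 < P₀)
    (w' : EuclideanSpace ℂ (Fin N_T))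
    (hw' : w' = (Real.sqrt (P₀ / ‖w‖ ^ 2)) • w) :
    (‖w'‖ ^ 2 = P₀ ∧ Ω ≤ ‖⟪h, w'⟫‖ ^ 2 ∧
        ‖⟪a, w⟫‖ ^ 2 < ‖⟪a, w'⟫‖ ^ 2) ∧
      (∀ wstar : EuclideanSpace ℂ (Fin N_T),
        ‖wstar‖ ^ 2 ≤ P₀ → Ω ≤ ‖⟪h, wstar⟫‖ ^ 2 →
        ⟪a, wstar⟫ ≠ 0 →
        (∀ v : EuclideanSpace ℂ (Fin N_T),
          ‖v‖ ^ 2 ≤ P₀ → Ω ≤ ‖⟪h, v⟫‖ ^ 2 →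
            ‖⟪a, v⟫‖ ^ 2 ≤ ‖⟪a, wstar⟫‖ ^ 2) →
        ‖wstar‖ ^ 2 = P₀) := by
  subst hw'
  refine ⟨rescale_to_full_power hw_snr hw_obj hw_strict, ?_⟩
  intro wstar hpow hsnr hobj hmax
  by_contra hne
  obtain ⟨hfull, hsnr', himproves⟩ := rescale_to_full_power hsnr hobj (hpow.lt_of_ne hne)
  exact (hmax _ hfull.le hsnr').not_gt himproves

/-- First step of the proof of Lemma 1 (Appendix A): scaling a strictly
power-infeasible beamformer up to full power keeps it feasible and strictly
increases the objective; hence any maximizer with nonzero objective uses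
full power. -/
theorem stmt_6 (N_T : ℕ) (P₀ Ω : ℝ) (hP₀ : 0 < P₀) (hΩ : 0 < Ω)
    (h a w : EuclideanSpace ℂ (Fin N_T))
    (hw_pow : ‖w‖ ^ 2 ≤ P₀) (hw_snr : Ω ≤ ‖⟪h, w⟫‖ ^ 2)
    (hw_obj : ⟪a, w⟫ ≠ 0) (hw_strict : ‖w‖ ^ 2 < P₀)
    (w' : EuclideanSpace ℂ (Fin N_T))
    (hw' : w' = (Real.sqrt (P₀ / ‖w‖ ^ 2)) • w) :
    (‖w'‖ ^ 2 = P₀ ∧ Ω ≤ ‖⟪h, w'⟫‖ ^ 2 ∧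
        ‖⟪a, w⟫‖ ^ 2 < ‖⟪a, w'⟫‖ ^ 2) ∧
      (∀ wstar : EuclideanSpace ℂ (Fin N_T),
        ‖wstar‖ ^ 2 ≤ P₀ → Ω ≤ ‖⟪h, wstar⟫‖ ^ 2 →
        ⟪a, wstar⟫ ≠ 0 →
        (∀ v : EuclideanSpace ℂ (Fin N_T),
          ‖v‖ ^ 2 ≤ P₀ → Ω ≤ ‖⟪h, v⟫‖ ^ 2 →
            ‖⟪a, v⟫‖ ^ 2 ≤ ‖⟪a, wstar⟫‖ ^ 2) →
        ‖wstar‖ ^ 2 = P₀) :=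
  stmt_6_general N_T P₀ Ω h a w hw_snr hw_obj hw_strict w' hw'
end

section
/- Let a₁, a₂, w ∈ ℂ^{N_T}, b₁, b₂ ∈ ℂ^{N_R} with N_R ≥ 2, and let L, β², γ², σ² > 0 be reals. Let P = a₁ b₁^H and Q = a₂ b₂^H be the rank-one N_T×N_R matrices with entries P_{ij} = (a₁)_i·conj((b₁)_j) and Q_{ij} = (a₂)_i·conj((b₂)_j). Then det(L·β²·P^H w w^H P + L·γ²·Q^H w w^H Q + σ²·I_{N_R}) = (σ²)^{N_R−2}·[(L·γ²·‖b₂‖²·|⟨a₂, w⟩|² + σ²)·(L·β²·‖b₁‖²·|⟨a₁, w⟩|² + σ²) − L²·β²·γ²·|⟨a₁, w⟩|²·|⟨a₂, w⟩|²·|⟨b₁, b₂⟩|²]. (Equation (22): the determinant in the mutual information objective with interference from the communication user, evaluated for point-target response matrices.) -/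
/-!
Since `Pᴴ w = ⟨a₁, w⟩ b₁` and `Qᴴ w = ⟨a₂, w⟩ b₂`, the matrix is `σ² I` plus a rank-two
perturbation `A B` with `A` of size `N_R × 2`. Comparing characteristic polynomials of `A B`
and `B A` gives `det (s I_N + A B) = s ^ (N - 2) * det (s I_2 + B A)`, and the right-hand
side is an explicit `2 × 2` determinant of inner products.
-/

open Matrix

namespace Matrix

variable {m n R : Type*} [Fintype m] [CommRing R]

theorem det_smul_one_add_mul_of_card_le [Fintype n] [DecidableEq m] [DecidableEq n] (s : R)
    (A : Matrix m n R) (B : Matrix n m R) (h : Fintype.card n ≤ Fintype.card m) :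
    det (s • 1 + A * B) = s ^ (Fintype.card m - Fintype.card n) * det (s • 1 + B * A) := by
  have := congrArg (Polynomial.eval s) (charpoly_mul_comm_of_le (-A) B h)
  simpa [eval_charpoly, sub_eq_add_neg, smul_one_eq_diagonal] using this

theorem det_smul_one_add_vecMulVec_add_vecMulVec [DecidableEq m] (s : R) (u v x y : m → R)
    (h : 2 ≤ Fintype.card m) :
    det (s • 1 + vecMulVec u x + vecMulVec v y) =
      s ^ (Fintype.card m - 2) * ((s + x ⬝ᵥ u) * (s + y ⬝ᵥ v) - (x ⬝ᵥ v) * (y ⬝ᵥ u)) := by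
  let A : Matrix m (Fin 2) R := of fun i => ![u i, v i]
  let B : Matrix (Fin 2) m R := of ![x, y]
  have hAB : A * B = vecMulVec u x + vecMulVec v y := by
    ext i j
    simp [A, B, mul_apply, Fin.sum_univ_two, vecMulVec_apply]
  have hBA : B * A = !![x ⬝ᵥ u, x ⬝ᵥ v; y ⬝ᵥ u, y ⬝ᵥ v] := by
    ext i j
    fin_cases i <;> fin_cases j <;> simp [A, B, mul_apply, dotProduct]
  rw [add_assoc, ← hAB, det_smul_one_add_mul_of_card_le s A B (by simpa using h), hBA,
    Fintype.card_fin]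
  simp [det_fin_two]

theorem conjTranspose_vecMulVec_star_mulVec [StarRing R] (a w : m → R) (b : n → R) :
    (vecMulVec a (star b))ᴴ *ᵥ w = (star a ⬝ᵥ w) • b := by
  rw [conjTranspose_vecMulVec, star_star, vecMulVec_mulVec, op_smul_eq_smul]

end Matrix

theorem Complex.ofReal_sum_norm_sq_eq_star_dotProduct {n : Type*} [Fintype n] (b : n → ℂ) :
    ((∑ j, ‖b j‖ ^ 2 : ℝ) : ℂ) = star b ⬝ᵥ b := by
  simp [dotProduct, Complex.sq_norm, Complex.mul_conj, mul_comm]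

theorem stmt_10_general (N_T N_R : ℕ) (hNR : 2 ≤ N_R)
    (a₁ a₂ w : Fin N_T → ℂ) (b₁ b₂ : Fin N_R → ℂ)
    (L βsq γsq σsq : ℝ)
    (P Q : Matrix (Fin N_T) (Fin N_R) ℂ)
    (hP : ∀ i j, P i j = a₁ i * (starRingEnd ℂ) (b₁ j))
    (hQ : ∀ i j, Q i j = a₂ i * (starRingEnd ℂ) (b₂ j)) :
    Matrix.det
        (((L * βsq : ℝ) : ℂ) • Matrix.vecMulVec (Pᴴ *ᵥ w) (star (Pᴴ *ᵥ w)) +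
          ((L * γsq : ℝ) : ℂ) • Matrix.vecMulVec (Qᴴ *ᵥ w) (star (Qᴴ *ᵥ w)) +
            (σsq : ℂ) • (1 : Matrix (Fin N_R) (Fin N_R) ℂ)) =
      (σsq : ℂ) ^ (N_R - 2) *
        ((((L * γsq : ℝ) : ℂ) * ((∑ j, ‖b₂ j‖ ^ 2 : ℝ) : ℂ) *
            ((‖star a₂ ⬝ᵥ w‖ ^ 2 : ℝ) : ℂ) + (σsq : ℂ)) *
          (((L * βsq : ℝ) : ℂ) * ((∑ j, ‖b₁ j‖ ^ 2 : ℝ) : ℂ) *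
            ((‖star a₁ ⬝ᵥ w‖ ^ 2 : ℝ) : ℂ) + (σsq : ℂ)) -
        ((L ^ 2 * βsq * γsq : ℝ) : ℂ) *
            ((‖star a₁ ⬝ᵥ w‖ ^ 2 : ℝ) : ℂ) *
            ((‖star a₂ ⬝ᵥ w‖ ^ 2 : ℝ) : ℂ) *
            ((‖star b₁ ⬝ᵥ b₂‖ ^ 2 : ℝ) : ℂ)) := by
  have hP' : P = vecMulVec a₁ (star b₁) := ext hP
  have hQ' : Q = vecMulVec a₂ (star b₂) := ext hQ
  rw [hP', hQ', conjTranspose_vecMulVec_star_mulVec, conjTranspose_vecMulVec_star_mulVec,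
    ← vecMulVec_smul, ← vecMulVec_smul, add_comm, ← add_assoc,
    det_smul_one_add_vecMulVec_add_vecMulVec _ _ _ _ _ (by simpa using hNR), Fintype.card_fin]
  simp only [star_smul, smul_dotProduct, dotProduct_smul, smul_eq_mul,
    Complex.ofReal_sum_norm_sq_eq_star_dotProduct]
  rw [star_dotProduct b₂ b₁]
  push_cast
  simp only [← Complex.mul_conj', Complex.star_def]
  ring

/-- Equation (22): the determinant in the mutual information objective with
interference from the communication user, evaluated for point-target response
matrices `P = a₁b₁ᴴ` and `Q = a₂b₂ᴴ`. -/
theorem stmt_10 (N_T N_R : ℕ) (hNR : 2 ≤ N_R)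
    (a₁ a₂ w : Fin N_T → ℂ) (b₁ b₂ : Fin N_R → ℂ)
    (L βsq γsq σsq : ℝ) (hL : 0 < L) (hβ : 0 < βsq) (hγ : 0 < γsq) (hσ : 0 < σsq)
    (P Q : Matrix (Fin N_T) (Fin N_R) ℂ)
    (hP : ∀ i j, P i j = a₁ i * (starRingEnd ℂ) (b₁ j))
    (hQ : ∀ i j, Q i j = a₂ i * (starRingEnd ℂ) (b₂ j)) :
    Matrix.det
        (((L * βsq : ℝ) : ℂ) • Matrix.vecMulVec (Pᴴ *ᵥ w) (star (Pᴴ *ᵥ w)) +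
          ((L * γsq : ℝ) : ℂ) • Matrix.vecMulVec (Qᴴ *ᵥ w) (star (Qᴴ *ᵥ w)) +
            (σsq : ℂ) • (1 : Matrix (Fin N_R) (Fin N_R) ℂ)) =
      (σsq : ℂ) ^ (N_R - 2) *
        ((((L * γsq : ℝ) : ℂ) * ((∑ j, ‖b₂ j‖ ^ 2 : ℝ) : ℂ) *
            ((‖star a₂ ⬝ᵥ w‖ ^ 2 : ℝ) : ℂ) + (σsq : ℂ)) *
          (((L * βsq : ℝ) : ℂ) * ((∑ j, ‖b₁ j‖ ^ 2 : ℝ) : ℂ) *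
            ((‖star a₁ ⬝ᵥ w‖ ^ 2 : ℝ) : ℂ) + (σsq : ℂ)) -
        ((L ^ 2 * βsq * γsq : ℝ) : ℂ) *
            ((‖star a₁ ⬝ᵥ w‖ ^ 2 : ℝ) : ℂ) *
            ((‖star a₂ ⬝ᵥ w‖ ^ 2 : ℝ) : ℂ) *
            ((‖star b₁ ⬝ᵥ b₂‖ ^ 2 : ℝ) : ℂ)) :=
  stmt_10_general N_T N_R hNR a₁ a₂ w b₁ b₂ L βsq γsq σsq P Q hP hQ
end
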